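/- Let n ≥ 2 be an integer and ω > 1 − 2/n a real number. Let q be the diagonal n×n matrix with diagonal entries q_{11},…,q_{nn} ∈ ]0,+∞[ and let Q ≡ Π_{j=1}^n ]0,q_{jj}[. Let Ω_Q be a bounded open subset of ℝⁿ with closure contained in Q, and assume that Q∖cl(Ω_Q) is connected. Set S[Ω_Q] ≡ qℤⁿ + Ω_Q and S[Ω_Q]⁻ ≡ ℝⁿ∖cl(S[Ω_Q]). Let u : cl(S[Ω_Q]⁻) → ℝⁿ be continuous on cl(S[Ω_Q]⁻), twice continuously differentiable on the open set S[Ω_Q]⁻, q-periodic (i.e., u(x+qz) = u(x) for all x ∈ cl(S[Ω_Q]⁻) and z ∈ ℤⁿ), and satisfy tr(T(ω,Du(x))·Du(x)ᵗ) = 0 for every x ∈ S[Ω_Q]⁻. Then u is constant on cl(S[Ω_Q]⁻). -/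

import Mathlib

open Matrix

/-- Partial derivative `∂f/∂x_j` of a scalar field on `ℝⁿ`. -/
noncomputable def pd {n : ℕ} (f : (Fin n → ℝ) → ℝ) (j : Fin n) (x : Fin n → ℝ) : ℝ :=
  fderiv ℝ f x (Pi.single j 1)

/-- The Jacobian matrix `(∂u_i/∂x_j)_{i,j}` of a vector field on `ℝⁿ`. -/
noncomputable def jac {n : ℕ} (u : (Fin n → ℝ) → Fin n → ℝ) (x : Fin n → ℝ) :
    Matrix (Fin n) (Fin n) ℝ :=
  Matrix.of fun i j => pd (fun w => u w i) j x

/-- `T ω A = (ω-1)(tr A) Iₙ + A + Aᵗ`. -/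
noncomputable def elastT (n : ℕ) (ω : ℝ) (A : Matrix (Fin n) (Fin n) ℝ) :
    Matrix (Fin n) (Fin n) ℝ :=
  ((ω - 1) * Matrix.trace A) • (1 : Matrix (Fin n) (Fin n) ℝ) + A + Aᵀ

/-!
Expanding the trace gives `tr (T(ω,A) Aᵗ) = (ω - 1) (tr A)² + ½ ‖A + Aᵗ‖²`, and Cauchy–Schwarz on
the diagonal gives `4 (tr A)² ≤ n ‖A + Aᵗ‖²`; since `ω - 1 + 2/n > 0`, the equation forces
`A + Aᵗ = 0`. So `Du` is skew on `S[Ω_Q]⁻`. Then `∂ₖ∂ⱼuᵢ` is symmetric in `(j, k)` and antisymmetric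
in `(i, j)`, hence zero, and `u` is affine on every connected open set.

`S[Ω_Q]⁻` is connected: it is the union of the translates `qz + (cl Q ∖ cl Ω_Q)`, each connected
because `Q ∖ cl Ω_Q` is, and the cells indexed by `z` and `z + eⱼ` share the corner `q(z + 1)`.
Periodicity then forces the linear part of `u` to vanish on `qℤⁿ`, hence everywhere, and
continuity carries the constant value to the closure.
-/

open Set Topology

section Algebra

variable {n : ℕ}

theorem trace_elastT_mul_transpose (ω : ℝ) (A : Matrix (Fin n) (Fin n) ℝ) :
    trace (elastT n ω A * Aᵀ) =
      (ω - 1) * A.trace ^ 2 + (∑ i, ∑ j, (A i j + A j i) ^ 2) / 2 := by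
  have hsq : ∑ i, ∑ j, (A i j + A j i) ^ 2 =
      2 * ∑ i, ∑ j, A i j ^ 2 + 2 * ∑ i, ∑ j, A j i * A i j := by
    have hterm : ∀ i j, (A i j + A j i) ^ 2 = A i j ^ 2 + A j i ^ 2 + 2 * (A j i * A i j) :=
      fun _ _ => by ring
    simp only [hterm, Finset.sum_add_distrib, ← Finset.mul_sum]
    rw [Finset.sum_comm (f := fun i j => A j i ^ 2)]
    ring
  simp only [elastT, Matrix.add_mul, trace_add, Matrix.smul_mul, Matrix.one_mul, trace_smul,
    trace_transpose, smul_eq_mul, hsq]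
  simp only [trace, diag_apply, mul_apply, transpose_apply, sq]
  ring

theorem four_mul_sq_trace_le (A : Matrix (Fin n) (Fin n) ℝ) :
    4 * A.trace ^ 2 ≤ n * ∑ i, ∑ j, (A i j + A j i) ^ 2 :=
  calc 4 * A.trace ^ 2 = (∑ i, (A i i + A i i)) ^ 2 := by
        simp only [trace, diag_apply, Finset.sum_add_distrib]; ring
    _ ≤ n * ∑ i, (A i i + A i i) ^ 2 := by
        simpa using sq_sum_le_card_mul_sum_sq (s := Finset.univ) (f := fun i => A i i + A i i)
    _ ≤ n * ∑ i, ∑ j, (A i j + A j i) ^ 2 := by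
        gcongr with i
        exact Finset.single_le_sum (f := fun j => (A i j + A j i) ^ 2)
          (fun _ _ => sq_nonneg _) (Finset.mem_univ i)

theorem transpose_eq_neg_of_trace_elastT_mul_transpose_eq_zero {ω : ℝ}
    (hω : 1 - 2 / (n : ℝ) < ω) {A : Matrix (Fin n) (Fin n) ℝ}
    (h : trace (elastT n ω A * Aᵀ) = 0) : Aᵀ = -A := by
  rcases Nat.eq_zero_or_pos n with rfl | hn
  · exact Subsingleton.elim _ _
  set s := ∑ i, ∑ j, (A i j + A j i) ^ 2
  have hs : 0 ≤ s := by positivity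
  have hn' : (0 : ℝ) < n := by exact_mod_cast hn
  rw [trace_elastT_mul_transpose] at h
  have hcs := four_mul_sq_trace_le A
  have hcoef : 0 < ω - 1 + 2 / n := by linarith
  have hle : (ω - 1 + 2 / n) * A.trace ^ 2 ≤ 0 := by
    have : 2 / n * A.trace ^ 2 ≤ s / 2 := by
      rw [div_mul_eq_mul_div, div_le_iff₀ hn']
      linarith
    linarith
  have ht : A.trace ^ 2 = 0 :=
    le_antisymm (nonpos_of_mul_nonpos_right hle hcoef) (sq_nonneg _)
  have hs0 : s = 0 := by rw [ht] at h; linarith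
  ext i j
  have hij : (A i j + A j i) ^ 2 = 0 :=
    (Finset.sum_eq_zero_iff_of_nonneg fun _ _ => by positivity).1
      ((Finset.sum_eq_zero_iff_of_nonneg fun _ _ => by positivity).1 hs0 i
        (Finset.mem_univ i)) j (Finset.mem_univ j)
  simp only [transpose_apply, Matrix.neg_apply]
  linarith [pow_eq_zero_iff (n := 2) two_ne_zero |>.1 hij]

end Algebra

theorem eq_zero_of_symm_of_antisymm {ι M : Type*} [AddCommGroup M] [IsAddTorsionFree M]
    {a : ι → ι → ι → M} (hsymm : ∀ i j k, a i j k = a i k j)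
    (hanti : ∀ i j k, a i j k = -a j i k) (i j k : ι) : a i j k = 0 :=
  self_eq_neg.mp <|
    calc a i j k = -a k j i := by rw [hsymm, hanti, hsymm]
      _ = a j i k := by rw [hanti k j i, neg_neg, hsymm]
      _ = -a i j k := hanti j i k

theorem ContinuousLinearMap.eq_zero_of_apply_single {R ι M : Type*} [Semiring R]
    [TopologicalSpace R] [Fintype ι] [DecidableEq ι] [AddCommMonoid M] [Module R M]
    [TopologicalSpace M] {f : (ι → R) →L[R] M} (h : ∀ i, f (Pi.single i 1) = 0) : f = 0 :=
  coe_injective <| (Pi.basisFun R ι).ext fun i => by simpa using h i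

section Calculus

variable {n : ℕ} {u : (Fin n → ℝ) → Fin n → ℝ} {s : Set (Fin n → ℝ)}

theorem jac_apply_of_differentiableAt {x : Fin n → ℝ} (hu : DifferentiableAt ℝ u x)
    (i j : Fin n) : jac u x i j = fderiv ℝ u x (Pi.single j 1) i := by
  simp [jac, pd, fderiv_apply hu i]

theorem fderiv_fderiv_eq_zero_of_jac_skew (hs : IsOpen s) (hu : ContDiffOn ℝ 2 u s)
    (hskew : ∀ y ∈ s, (jac u y)ᵀ = -jac u y) {x : Fin n → ℝ} (hx : x ∈ s) :
    fderiv ℝ (fderiv ℝ u) x = 0 := by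
  have hux : ContDiffAt ℝ 2 u x := hu.contDiffAt (hs.mem_nhds hx)
  set B := fderiv ℝ (fderiv ℝ u) x
  have hB : HasFDerivAt (fderiv ℝ u) B x :=
    ((hux.fderiv_right (m := 1) le_rfl).differentiableAt one_ne_zero).hasFDerivAt
  let entry : Fin n → Fin n → ((Fin n → ℝ) →L[ℝ] Fin n → ℝ) →L[ℝ] ℝ := fun i j =>
    (ContinuousLinearMap.proj (R := ℝ) (φ := fun _ : Fin n => ℝ) i).comp
      (ContinuousLinearMap.apply ℝ _ (Pi.single j 1))
  have hanti : ∀ i j k, B (Pi.single k 1) (Pi.single j 1) i =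
      -B (Pi.single k 1) (Pi.single i 1) j := by
    intro i j k
    have heq : (fun y => entry i j (fderiv ℝ u y)) =ᶠ[𝓝 x]
        fun y => -entry j i (fderiv ℝ u y) := by
      filter_upwards [hs.mem_nhds hx] with y hy
      have hdy : DifferentiableAt ℝ u y :=
        (hu.contDiffAt (hs.mem_nhds hy)).differentiableAt two_ne_zero
      have hij := congr_fun (congr_fun (hskew y hy) j) i
      simpa [entry, jac_apply_of_differentiableAt hdy] using hij
    have h1 := (entry i j).hasFDerivAt.comp x hB
    have h2 := ((entry j i).hasFDerivAt.comp x hB).neg.congr_of_eventuallyEq heq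
    simpa [entry] using congrArg (· (Pi.single k 1)) (h1.unique h2)
  have hsymm : ∀ i j k, B (Pi.single k 1) (Pi.single j 1) i =
      B (Pi.single j 1) (Pi.single k 1) i := fun i j k => by
    rw [(hux.isSymmSndFDerivAt (by simp)).eq]
  refine ContinuousLinearMap.eq_zero_of_apply_single fun k =>
    ContinuousLinearMap.eq_zero_of_apply_single fun j => funext fun i => ?_
  exact eq_zero_of_symm_of_antisymm (a := fun i j k => B (Pi.single k 1) (Pi.single j 1) i)
    hsymm hanti i j k

theorem IsOpen.exists_eq_clm_add_of_jac_skew (hs : IsOpen s) (hs' : IsPreconnected s)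
    (hu : ContDiffOn ℝ 2 u s) (hskew : ∀ y ∈ s, (jac u y)ᵀ = -jac u y) :
    ∃ (L : (Fin n → ℝ) →L[ℝ] Fin n → ℝ) (a : Fin n → ℝ), ∀ x ∈ s, u x = L x + a := by
  obtain ⟨L, hL⟩ := hs.exists_is_const_of_fderiv_eq_zero hs'
    ((hu.fderiv_of_isOpen hs (m := 1) le_rfl).differentiableOn one_ne_zero)
    fun x hx => fderiv_fderiv_eq_zero_of_jac_skew hs hu hskew hx
  obtain ⟨a, ha⟩ := hs.exists_eq_add_of_fderiv_eq hs' (hu.differentiableOn two_ne_zero)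
    L.differentiableOn fun x hx => by rw [hL x hx, L.fderiv]
  exact ⟨L, a, ha⟩

end Calculus

theorem Relation.reflTransGen_of_add_single {ι : Type*} [Fintype ι] [DecidableEq ι]
    {r : (ι → ℤ) → (ι → ℤ) → Prop} (hr : ∀ z i, r z (z + Pi.single i 1))
    (hsymm : ∀ z z', r z z' → r z' z) (z z' : ι → ℤ) : Relation.ReflTransGen r z z' := by
  have hupdate : ∀ (z : ι → ℤ) i (m : ℤ),
      Function.update z i m + Pi.single i 1 = Function.update z i (Order.succ m) := by
    intro z i m
    ext k
    rcases eq_or_ne k i with rfl | hk <;> simp [*, Order.succ_eq_add_one]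
  have hline : ∀ (z : ι → ℤ) i (m : ℤ), ReflTransGen r z (Function.update z i m) := by
    intro z i m
    have := reflTransGen_of_succ (n := z i) (m := m)
      (fun a b : ℤ => r (Function.update z i a) (Function.update z i b))
      (fun a _ => hupdate z i a ▸ hr _ i) (fun a _ => hsymm _ _ (hupdate z i a ▸ hr _ i))
    simpa [Function.onFun] using
      ReflTransGen.lift (Function.update z i) (fun _ _ h => h) _ _ this
  have hpiece : ∀ s : Finset ι, ReflTransGen r z (s.piecewise z' z) := by
    intro s
    induction s using Finset.induction_on with
    | empty => simpa using ReflTransGen.refl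
    | insert i s _ ih => simpa [Finset.piecewise_insert] using ih.trans (hline _ i (z' i))
  simpa using hpiece Finset.univ

theorem Int.eq_of_mul_add_eq_mul_add {q a b : ℝ} {m m' : ℤ} (ha : a ∈ Icc 0 q)
    (hb : b ∈ Ioo 0 q) (h : q * m + a = q * m' + b) : m = m' := by
  have hq : 0 < q := hb.1.trans hb.2
  have hlt : |((m - m' : ℤ) : ℝ)| < 1 := by
    push_cast
    rw [abs_lt]
    constructor <;> nlinarith [ha.1, ha.2, hb.1, hb.2]
  have : |m - m'| < 1 := by exact_mod_cast hlt
  rw [Int.abs_lt_one_iff, sub_eq_zero] at this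
  exact this

theorem Int.finite_setOf_mul_mem_Icc {q : ℝ} (hq : 0 < q) (a b : ℝ) :
    {m : ℤ | q * m ∈ Icc a b}.Finite :=
  (finite_Icc ⌈a / q⌉ ⌊b / q⌋).subset fun m hm => by
    constructor
    · rw [Int.ceil_le, div_le_iff₀ hq, mul_comm]; exact hm.1
    · rw [Int.le_floor, le_div_iff₀ hq, mul_comm]; exact hm.2

section Lattice

variable {n : ℕ} (qd : Fin n → ℝ)

def latticeVec (z : Fin n → ℤ) : Fin n → ℝ := fun j => qd j * z j

def openCell : Set (Fin n → ℝ) := univ.pi fun j => Ioo 0 (qd j)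

def closedCell : Set (Fin n → ℝ) := univ.pi fun j => Icc 0 (qd j)

def periodize (K : Set (Fin n → ℝ)) : Set (Fin n → ℝ) :=
  ⋃ z : Fin n → ℤ, (latticeVec qd z + ·) '' K

variable {qd}

theorem latticeVec_add (z w : Fin n → ℤ) :
    latticeVec qd (z + w) = latticeVec qd z + latticeVec qd w := by
  ext j; simp [latticeVec, mul_add]

theorem latticeVec_single (j : Fin n) : latticeVec qd (Pi.single j 1) = Pi.single j (qd j) := by
  ext k; rcases eq_or_ne k j with rfl | hk <;> simp [latticeVec, *]

theorem openCell_subset_closedCell : openCell qd ⊆ closedCell qd :=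
  pi_mono fun _ _ => Ioo_subset_Icc_self

theorem closure_openCell (hq : ∀ j, 0 < qd j) : closure (openCell qd) = closedCell qd := by
  simp only [openCell, closedCell, closure_pi_set, closure_Ioo (hq _).ne]

theorem mem_periodize {K : Set (Fin n → ℝ)} {x : Fin n → ℝ} :
    x ∈ periodize qd K ↔ ∃ z, x - latticeVec qd z ∈ K := by
  simp [periodize, neg_add_eq_sub]

theorem add_latticeVec_mem_periodize {K : Set (Fin n → ℝ)} {x : Fin n → ℝ} (z : Fin n → ℤ) :
    x + latticeVec qd z ∈ periodize qd K ↔ x ∈ periodize qd K := by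
  simp only [mem_periodize]
  refine ⟨fun ⟨w, hw⟩ => ⟨w - z, ?_⟩, fun ⟨w, hw⟩ => ⟨w + z, ?_⟩⟩
  · rwa [show w = (w - z) + z by abel, latticeVec_add, add_sub_add_right_eq_sub] at hw
  · rwa [latticeVec_add, add_sub_add_right_eq_sub]

theorem locallyFinite_latticeVec_add_image (hq : ∀ j, 0 < qd j) {K : Set (Fin n → ℝ)}
    (hK : K ⊆ closedCell qd) : LocallyFinite fun z : Fin n → ℤ => (latticeVec qd z + ·) '' K := by
  intro x
  refine ⟨Metric.ball x 1, Metric.ball_mem_nhds x one_pos, ?_⟩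
  refine (Set.Finite.pi fun j =>
    Int.finite_setOf_mul_mem_Icc (hq j) (x j - 1 - qd j) (x j + 1)).subset ?_
  rintro z ⟨_, ⟨k, hk, rfl⟩, hball⟩ j -
  have hkj := hK hk j (mem_univ j)
  have hdist : |qd j * z j + k j - x j| < 1 :=
    (Real.dist_eq _ _ ▸ dist_le_pi_dist (latticeVec qd z + k) x j).trans_lt hball
  rw [abs_lt] at hdist
  constructor <;> linarith [hkj.1, hkj.2]

theorem closure_periodize (hq : ∀ j, 0 < qd j) {K : Set (Fin n → ℝ)} (hK : K ⊆ closedCell qd) :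
    closure (periodize qd K) = periodize qd (closure K) := by
  rw [periodize, (locallyFinite_latticeVec_add_image hq hK).closure_iUnion]
  exact iUnion_congr fun z => ((Homeomorph.addLeft (latticeVec qd z)).image_closure K).symm

theorem eq_of_latticeVec_add_eq {z z' : Fin n → ℤ} {a k : Fin n → ℝ} (ha : a ∈ closedCell qd)
    (hk : k ∈ openCell qd) (h : latticeVec qd z + a = latticeVec qd z' + k) : z = z' :=
  funext fun j => Int.eq_of_mul_add_eq_mul_add (ha j (mem_univ j)) (hk j (mem_univ j))
    (congrFun h j)

theorem sub_latticeVec_floor_mem_closedCell (hq : ∀ j, 0 < qd j) (x : Fin n → ℝ) :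
    x - latticeVec qd (fun j => ⌊x j / qd j⌋) ∈ closedCell qd := by
  intro j _
  have h1 := Int.floor_le (x j / qd j)
  have h2 := Int.lt_floor_add_one (x j / qd j)
  rw [le_div_iff₀ (hq j)] at h1
  rw [div_lt_iff₀ (hq j)] at h2
  simp only [Pi.sub_apply, latticeVec, mem_Icc]
  constructor <;> nlinarith

theorem compl_periodize_eq_iUnion (hq : ∀ j, 0 < qd j) {K : Set (Fin n → ℝ)}
    (hK : K ⊆ openCell qd) :
    (periodize qd K)ᶜ = ⋃ z, (latticeVec qd z + ·) '' (closedCell qd \ K) := by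
  ext x
  simp only [mem_compl_iff, mem_periodize, mem_iUnion, image_add_left, mem_preimage,
    neg_add_eq_sub, Set.mem_sdiff, not_exists]
  constructor
  · exact fun hx => ⟨_, sub_latticeVec_floor_mem_closedCell hq x, hx _⟩
  · rintro ⟨z, ha, haK⟩ z' hk
    obtain rfl : z = z' := eq_of_latticeVec_add_eq ha (hK hk) (by abel)
    exact haK hk

theorem isPreconnected_closedCell_diff (hq : ∀ j, 0 < qd j) {K : Set (Fin n → ℝ)}
    (hK : IsClosed K) (hconn : IsPreconnected (openCell qd \ K)) :
    IsPreconnected (closedCell qd \ K) := by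
  refine hconn.subset_closure (sdiff_subset_sdiff_left openCell_subset_closedCell) ?_
  calc closedCell qd \ K = Kᶜ ∩ closure (openCell qd) := by
        rw [closure_openCell hq, sdiff_eq, inter_comm]
    _ ⊆ closure (Kᶜ ∩ openCell qd) := hK.isOpen_compl.inter_closure
    _ = closure (openCell qd \ K) := by rw [sdiff_eq, inter_comm]

theorem latticeVec_add_image_inter_nonempty (hq : ∀ j, 0 < qd j) {K : Set (Fin n → ℝ)}
    (hK : K ⊆ openCell qd) (z : Fin n → ℤ) (j : Fin n) :
    ((latticeVec qd z + ·) '' (closedCell qd \ K) ∩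
      (latticeVec qd (z + Pi.single j 1) + ·) '' (closedCell qd \ K)).Nonempty := by
  have hqcell : qd ∈ closedCell qd := fun k _ => ⟨(hq k).le, le_rfl⟩
  refine ⟨latticeVec qd z + qd, mem_image_of_mem _ ⟨hqcell, fun h => ?_⟩,
    qd - Pi.single j (qd j), ⟨fun k _ => ?_, fun h => ?_⟩, ?_⟩
  · exact (hK h j (mem_univ j)).2.ne rfl
  · rcases eq_or_ne k j with rfl | hk <;> simp [*, (hq k).le]
  · simpa using (hK h j (mem_univ j)).1
  · rw [latticeVec_add, latticeVec_single]; beta_reduce; abel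

theorem isPreconnected_compl_periodize (hq : ∀ j, 0 < qd j) {K : Set (Fin n → ℝ)}
    (hK : IsClosed K) (hKQ : K ⊆ openCell qd) (hconn : IsPreconnected (openCell qd \ K)) :
    IsPreconnected (periodize qd K)ᶜ := by
  rw [compl_periodize_eq_iUnion hq hKQ]
  refine IsPreconnected.iUnion_of_reflTransGen (fun z =>
    (isPreconnected_closedCell_diff hq hK hconn).image _ (continuous_const_add _).continuousOn) ?_
  exact Relation.reflTransGen_of_add_single (latticeVec_add_image_inter_nonempty hq hKQ)
    fun _ _ h => by rwa [inter_comm]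

theorem self_mem_compl_periodize [NeZero n] (hq : ∀ j, 0 < qd j) {K : Set (Fin n → ℝ)}
    (hK : K ⊆ openCell qd) : qd ∈ (periodize qd K)ᶜ := by
  rw [compl_periodize_eq_iUnion hq hK]
  refine mem_iUnion.2
    ⟨0, qd, ⟨fun k _ => ⟨(hq k).le, le_rfl⟩, fun h => ?_⟩, by ext; simp [latticeVec]⟩
  exact (hK h 0 (mem_univ 0)).2.ne rfl

theorem ContinuousLinearMap.eq_zero_of_map_latticeVec {M : Type*} [AddCommGroup M]
    [Module ℝ M] [TopologicalSpace M] (hq : ∀ j, qd j ≠ 0) {L : (Fin n → ℝ) →L[ℝ] M}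
    (h : ∀ z, L (latticeVec qd z) = 0) : L = 0 :=
  eq_zero_of_apply_single fun j => by
    have := h (Pi.single j 1)
    rwa [latticeVec_single, ← mul_one (qd j), ← smul_eq_mul, Pi.single_smul', map_smul,
      smul_eq_zero, or_iff_right (hq j)] at this

end Lattice

theorem periodic_rigid_displacement_constant_general (n : ℕ) (hn : 2 ≤ n) (ω : ℝ)
    (hω : 1 - 2 / (n : ℝ) < ω)
    (qd : Fin n → ℝ) (hqd : ∀ j, 0 < qd j)
    -- the fundamental periodicity cell `Q = Π_j ]0, q_jj[`
    (Q : Set (Fin n → ℝ)) (hQ : Q = Set.univ.pi fun j => Set.Ioo 0 (qd j))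
    -- the perforation `Ω_Q`: bounded, open, with closure contained in `Q`,
    -- and such that `Q ∖ cl(Ω_Q)` is connected
    (Ω : Set (Fin n → ℝ))
    (hΩQ : closure Ω ⊆ Q) (hconn : IsConnected (Q \ closure Ω))
    -- the periodic perforated sets `S[Ω_Q] = qℤⁿ + Ω_Q` and `S[Ω_Q]⁻`
    (S Sm : Set (Fin n → ℝ))
    (hS : S = ⋃ z : Fin n → ℤ, (fun x => (fun j => qd j * (z j : ℝ)) + x) '' Ω)
    (hSm : Sm = (closure S)ᶜ)
    -- the displacement field `u`
    (u : (Fin n → ℝ) → Fin n → ℝ)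
    (hucont : ContinuousOn u (closure Sm))
    (husm : ContDiffOn ℝ 2 u Sm)
    (hper : ∀ x ∈ closure Sm, ∀ z : Fin n → ℤ,
      u (x + fun j => qd j * (z j : ℝ)) = u x)
    (htr : ∀ x ∈ Sm, Matrix.trace (elastT n ω (jac u x) * (jac u x)ᵀ) = 0) :
    ∃ c : Fin n → ℝ, ∀ x ∈ closure Sm, u x = c := by
  have : NeZero n := ⟨by omega⟩
  subst hQ
  have hopen : IsOpen Sm := hSm ▸ isClosed_closure.isOpen_compl
  have hSmT : Sm = (periodize qd (closure Ω))ᶜ := by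
    rw [hSm, hS]
    exact congrArg _ (closure_periodize hqd (subset_closure.trans
      (hΩQ.trans openCell_subset_closedCell)))
  have hqSm : qd ∈ Sm := hSmT ▸ self_mem_compl_periodize hqd hΩQ
  have hlatticeSm : ∀ z, qd + latticeVec qd z ∈ Sm := fun z => by
    rw [hSmT] at hqSm ⊢
    exact mt (add_latticeVec_mem_periodize z).1 hqSm
  obtain ⟨L, a, hLa⟩ := hopen.exists_eq_clm_add_of_jac_skew
    (hSmT ▸ isPreconnected_compl_periodize hqd isClosed_closure hΩQ hconn.isPreconnected) husm
    fun x hx => transpose_eq_neg_of_trace_elastT_mul_transpose_eq_zero hω (htr x hx)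
  have hL : L = 0 := L.eq_zero_of_map_latticeVec (fun j => (hqd j).ne') fun z => by
    have : u (qd + latticeVec qd z) = u qd := hper qd (subset_closure hqSm) z
    rwa [hLa _ (hlatticeSm z), hLa _ hqSm, map_add, add_right_comm, add_eq_left] at this
  have hconst : Set.EqOn u (fun _ => a) Sm := fun x hx => by simp [hLa x hx, hL]
  exact ⟨a, hconst.of_subset_closure hucont continuousOn_const subset_closure subset_rfl⟩

theorem periodic_rigid_displacement_constant (n : ℕ) (hn : 2 ≤ n) (ω : ℝ)
    (hω : 1 - 2 / (n : ℝ) < ω)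
    (qd : Fin n → ℝ) (hqd : ∀ j, 0 < qd j)
    -- the fundamental periodicity cell `Q = Π_j ]0, q_jj[`
    (Q : Set (Fin n → ℝ)) (hQ : Q = Set.univ.pi fun j => Set.Ioo 0 (qd j))
    -- the perforation `Ω_Q`: bounded, open, with closure contained in `Q`,
    -- and such that `Q ∖ cl(Ω_Q)` is connected
    (Ω : Set (Fin n → ℝ)) (hΩo : IsOpen Ω) (hΩb : Bornology.IsBounded Ω)
    (hΩQ : closure Ω ⊆ Q) (hconn : IsConnected (Q \ closure Ω))
    -- the periodic perforated sets `S[Ω_Q] = qℤⁿ + Ω_Q` and `S[Ω_Q]⁻`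
    (S Sm : Set (Fin n → ℝ))
    (hS : S = ⋃ z : Fin n → ℤ, (fun x => (fun j => qd j * (z j : ℝ)) + x) '' Ω)
    (hSm : Sm = (closure S)ᶜ)
    -- the displacement field `u`
    (u : (Fin n → ℝ) → Fin n → ℝ)
    (hucont : ContinuousOn u (closure Sm))
    (husm : ContDiffOn ℝ 2 u Sm)
    (hper : ∀ x ∈ closure Sm, ∀ z : Fin n → ℤ,
      u (x + fun j => qd j * (z j : ℝ)) = u x)
    (htr : ∀ x ∈ Sm, Matrix.trace (elastT n ω (jac u x) * (jac u x)ᵀ) = 0) :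
    ∃ c : Fin n → ℝ, ∀ x ∈ closure Sm, u x = c :=
  periodic_rigid_displacement_constant_general n hn ω hω qd hqd Q hQ Ω hΩQ hconn S Sm hS hSm u
    hucont husm hper htr
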